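/- In the prepare-and-measure FR protocol with final state |ψ_Fi⟩ = (1/√3)(|h⟩|↓,−½⟩ + |t⟩|↓,−½⟩ + |t⟩|↑,+½⟩), encoded on qubits as |ψ⟩ = (1/√3)(|0 0⟩_{R L̄}|0 0⟩_{S L} + |1 1⟩_{R L̄}|0 0⟩_{S L} + |1 1⟩_{R L̄}|1 1⟩_{S L}), the probability that W observes w = fail given that F̄ observed tails, under settings (x₁,x₂) = (1,1), equals 1/2: explicitly, Σ_{z∈{0,1}} tr[π_fail^W π_z^F π_tails^{F̄} ρ π_tails^{F̄} π_z^F] / tr[π_tails^{F̄} ρ] = 1/2, where ρ = |ψ⟩⟨ψ|, π_tails^{F̄} = |11⟩⟨11|_{R L̄} ⊗ 1, π_z^F = 1 ⊗ |zz⟩⟨zz|_{S L}, and π_fail^W = 1 ⊗ |fail⟩⟨fail|_{S L} with |fail⟩ = (|00⟩+|11⟩)/√2. In particular this differs from the value 1 obtained under settings (1,0), i.e. tr[π_fail^W π_tails^{F̄} ρ π_tails^{F̄}] / tr[π_tails^{F̄} ρ] = 1. -/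
import Mathlib


open Matrix BigOperators

/-- Two-qubit basis labels. -/
abbrev Q2 := Fin 2 × Fin 2
/-- Four-qubit basis labels, grouped as (R, L̄\) × (S, L\). -/
abbrev Q4 := Q2 × Q2

/-- `1/√3`. -/
noncomputable def c3 : ℂ := ((Real.sqrt 3 : ℝ) : ℂ)⁻¹
/-- `1/√2`. -/
noncomputable def c2 : ℂ := ((Real.sqrt 2 : ℝ) : ℂ)⁻¹

/-- Final state of the FR prepare-and-measure protocol encoded on four qubits:
`|ψ⟩ = (1/√3)(|00⟩|00⟩ + |11⟩|00⟩ + |11⟩|11⟩)` (heads↦0, tails↦1, ↓↦0, ↑↦1). -/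
noncomputable def ψFi : Q4 → ℂ := fun p =>
  if p = (((0, 0) : Q2), ((0, 0) : Q2)) then c3
  else if p = (((1, 1) : Q2), ((0, 0) : Q2)) then c3
  else if p = (((1, 1) : Q2), ((1, 1) : Q2)) then c3
  else 0

/-- `ρ = |ψ⟩⟨ψ|`. -/
noncomputable def ρFi : Matrix Q4 Q4 ℂ :=
  Matrix.of fun i j => ψFi i * star (ψFi j)

/-- `π_tails^{F̄} = |11⟩⟨11|_{R L̄} ⊗ 1`. -/
noncomputable def πt : Matrix Q4 Q4 ℂ :=
  Matrix.of fun p q => if p = q ∧ p.1 = ((1, 1) : Q2) then 1 else 0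

/-- `π_z^F = 1 ⊗ |zz⟩⟨zz|_{S L}`. -/
noncomputable def πz (z : Fin 2) : Matrix Q4 Q4 ℂ :=
  Matrix.of fun p q => if p = q ∧ p.2 = ((z, z) : Q2) then 1 else 0

/-- `|fail⟩ = (|00⟩ + |11⟩)/√2` on the lab L of F. -/
noncomputable def failv : Q2 → ℂ := fun p =>
  if p = ((0, 0) : Q2) then c2 else if p = ((1, 1) : Q2) then c2 else 0

/-- `π_fail^W = 1 ⊗ |fail⟩⟨fail|_{S L}`. -/
noncomputable def πfail : Matrix Q4 Q4 ℂ :=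
  Matrix.of fun p q => (if p.1 = q.1 then 1 else 0) * (failv p.2 * star (failv q.2))


lemma hsc3 : (starRingEnd ℂ) c3 = c3 := by simp [c3]
lemma hsc2 : (starRingEnd ℂ) c2 = c2 := by simp [c2]
lemma hc3 : c3 * c3 = 1/3 := by
  have h : ((Real.sqrt 3 : ℝ):ℂ) * ((Real.sqrt 3 : ℝ):ℂ) = 3 := by
    rw [← Complex.ofReal_mul, Real.mul_self_sqrt (by norm_num)]; norm_num
  rw [c3, ← mul_inv, h]; norm_num
lemma hc2 : c2 * c2 = 1/2 := by
  have h : ((Real.sqrt 2 : ℝ):ℂ) * ((Real.sqrt 2 : ℝ):ℂ) = 2 := by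
    rw [← Complex.ofReal_mul, Real.mul_self_sqrt (by norm_num)]; norm_num
  rw [c2, ← mul_inv, h]; norm_num

lemma πt_mul (M : Matrix Q4 Q4 ℂ) (p q : Q4) :
    (πt * M) p q = if p.1 = ((1,1):Q2) then M p q else 0 := by
  simp [Matrix.mul_apply, πt, ite_and]
lemma mul_πt (M : Matrix Q4 Q4 ℂ) (p q : Q4) :
    (M * πt) p q = if q.1 = ((1,1):Q2) then M p q else 0 := by
  simp [Matrix.mul_apply, πt, ite_and]
lemma πz_mul (z : Fin 2) (M : Matrix Q4 Q4 ℂ) (p q : Q4) :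
    (πz z * M) p q = if p.2 = ((z,z):Q2) then M p q else 0 := by
  simp [Matrix.mul_apply, πz, ite_and]
lemma mul_πz (z : Fin 2) (M : Matrix Q4 Q4 ℂ) (p q : Q4) :
    (M * πz z) p q = if q.2 = ((z,z):Q2) then M p q else 0 := by
  simp [Matrix.mul_apply, πz, ite_and]

lemma hden : (πt * ρFi).trace = 2/3 := by
  simp only [Matrix.trace, Matrix.diag, πt_mul]
  simp [ρFi, Fintype.sum_prod_type, Fin.sum_univ_two, ψFi, hsc3, Prod.ext_iff]
  rw [hc3]; norm_num
lemma hnum2 : (πfail * πt * ρFi * πt).trace = 2/3 := by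
  simp only [Matrix.trace, Matrix.diag, mul_πt]
  simp only [Matrix.mul_apply, mul_πt]
  simp [ρFi, πfail, πt, Fintype.sum_prod_type, Fin.sum_univ_two, ψFi, failv, hsc3, hsc2,
    Prod.ext_iff]
  ring_nf
  rw [show c2^2 = 1/2 by rw [sq, hc2], show c3^2 = 1/3 by rw [sq, hc3]]
  norm_num

lemma hnum1 (z : Fin 2) : (πfail * πz z * πt * ρFi * πt * πz z).trace = 1/6 := by
  simp only [Matrix.trace, Matrix.diag, mul_πz, mul_πt]
  simp only [Matrix.mul_apply, mul_πz, mul_πt]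
  simp [ρFi, πfail, πt, πz, Fintype.sum_prod_type, Fin.sum_univ_two, ψFi, failv, hsc3, hsc2,
    Prod.ext_iff]
  fin_cases z <;> simp <;> ring_nf <;>
    rw [show c2^2 = 1/2 by rw [sq, hc2], show c3^2 = 1/3 by rw [sq, hc3]] <;> norm_num

/-- given F̄ observed tails, the probability that W observes
`w = fail` is `1/2` under settings `(1,1)` (F's measurement projected) but `1`
under settings `(1,0)` (F's measurement modelled unitarily). -/
theorem fr_prepare_measure_setting_dependence :
    (∑ z : Fin 2, (πfail * πz z * πt * ρFi * πt * πz z).trace) / (πt * ρFi).trace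
        = 1 / 2 ∧
    (πfail * πt * ρFi * πt).trace / (πt * ρFi).trace = 1 ∧
    (1 / 2 : ℂ) ≠ 1 := by
  refine ⟨?_, ?_, by norm_num⟩
  · rw [Fin.sum_univ_two, hnum1 0, hnum1 1, hden]; norm_num
  · rw [hnum2, hden]; norm_num
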